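/- Let c : ℕ → ℕ be computable with unbounded range, let P : ℕ → ℚ be a computable pathway-probability bound that is jointly small along high-index objects, and let L be a set of codes that emulates the universal machine with overhead d (for some d : ℕ). Then for all E, m : ℕ there exists y : ℕ such that the sub-algorithmic complexity C_L(y) is attained (some code in L outputs y), C_L(y) + E < c(y), and (P(y) : ℝ) < 2^(-(C_L(y) + m)). (This is Theorem 2.4 of the paper: when the randomly generated computable generative processes of an infinite assembly space include ones effecting the deceiver's computation, the complexity error of the assembly index exceeds any prescribed error E, and the resulting frequency of occurrence of y diverges by a factor of at least 2^m from the expectation of Assembly Theory.) -/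

import Mathlib

/-!
By Kleene's recursion theorem there is a code `e` that searches for the first `y` with
`c y ≥ |e| + K` and `P y < 2^-(|e| + K)`; joint smallness of `P` along high-index objects makes
the search halt. Then `e` itself outputs `y`, so `C y ≤ |e|` and, by emulation,
`C_L y ≤ |e| + d`. Taking `K = d + E + m + 1`, the assembly index `c y` exceeds `C_L y + E` and
`P y < 2^-(C_L y + m)`. The only technical point is that the search test is computable, which
needs rational comparisons to be computable for Mathlib's encoding of `ℚ`.
-/

/-- The length of a program (code): number of binary digits of its encoding. -/
def codeLen (e : Nat.Partrec.Code) : ℕ := Nat.size (Encodable.encode e)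

/-- A code `e` outputs `y` if evaluating it on input `0` yields `y`. -/
def Outputs (e : Nat.Partrec.Code) (y : ℕ) : Prop := e.eval 0 = Part.some y

/-- Kolmogorov complexity of `y`: the least length of a code outputting `y`. -/
noncomputable def C (y : ℕ) : ℕ := sInf { n | ∃ e : Nat.Partrec.Code, Outputs e y ∧ codeLen e = n }

/-- Sub-algorithmic complexity of `y` relative to a set `L` of codes (the allowed
generative processes): the least length of a code in `L` that outputs `y`. -/
noncomputable def CL (L : Set Nat.Partrec.Code) (y : ℕ) : ℕ :=
  sInf { n | ∃ e ∈ L, Outputs e y ∧ codeLen e = n }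

open Nat.Partrec (Code)
open Encodable (encode)

theorem Nat.findGreatest_dvd_and_dvd_eq_gcd (a b : ℕ) :
    Nat.findGreatest (fun d => d ∣ a ∧ d ∣ b) (a + b) = Nat.gcd a b := by
  rcases Nat.eq_zero_or_pos (Nat.gcd a b) with h0 | hpos
  · obtain ⟨rfl, rfl⟩ := Nat.gcd_eq_zero_iff.1 h0
    simp
  refine Nat.findGreatest_eq_iff.2 ⟨?_, fun _ => ⟨Nat.gcd_dvd_left a b, Nat.gcd_dvd_right a b⟩, ?_⟩
  · have := Nat.gcd_pos_iff.1 hpos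
    exact Nat.le_of_dvd (by omega) (Nat.dvd_add (Nat.gcd_dvd_left a b) (Nat.gcd_dvd_right a b))
  · rintro n hlt - ⟨ha, hb⟩
    exact absurd (Nat.le_of_dvd hpos (Nat.dvd_gcd ha hb)) (by omega)

namespace Primrec

theorem nat_pow : Primrec₂ ((· ^ ·) : ℕ → ℕ → ℕ) :=
  Primrec₂.unpaired'.1 Nat.Primrec.pow

theorem nat_gcd : Primrec₂ Nat.gcd := by
  have hdvd : PrimrecRel fun (p : ℕ × ℕ) (d : ℕ) => d ∣ p.1 ∧ d ∣ p.2 :=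
    (PrimrecPred.and (Primrec.eq.comp (nat_mod.comp (fst.comp fst) snd) (const 0))
      (Primrec.eq.comp (nat_mod.comp (snd.comp fst) snd) (const 0))).of_eq
      fun _ => by simp only [Nat.dvd_iff_mod_eq_zero]
  exact (nat_findGreatest (nat_add.comp fst snd) hdvd).of_eq
    fun p => Nat.findGreatest_dvd_and_dvd_eq_gcd p.1 p.2

theorem nat_count {p : ℕ → Prop} [DecidablePred p] (hp : PrimrecPred p) : Primrec (Nat.count p) :=
  (list_length.comp ((listFilter hp).comp list_range)).of_eq
    fun n => by simp only [Nat.count, List.countP_eq_length_filter]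

end Primrec

theorem Computable.of_count {α : Type*} [Primcodable α] {p : ℕ → Prop} [DecidablePred p]
    (hp : PrimrecPred p) {f : α → ℕ} (hf : ∀ a, p (f a))
    (hcount : Computable fun a => Nat.count p (f a)) : Computable f := by
  -- `f a` is the first element of `p` whose count is `Nat.count p (f a)`.
  have htest : Computable₂ fun (k m : ℕ) => decide (p m ∧ Nat.count p m = k) :=
    (PrimrecPred.and (hp.comp Primrec.snd)
      (Primrec.eq.comp ((Primrec.nat_count hp).comp Primrec.snd) Primrec.fst)).decide.to_comp
  have hsearch : Partrec fun a =>
      Nat.rfind fun m => Part.some (decide (p m ∧ Nat.count p m = Nat.count p (f a))) :=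
    Partrec.rfind (htest.comp (hcount.comp Computable.fst) Computable.snd).to₂.partrec₂
  refine hsearch.of_eq_tot fun a => Nat.mem_rfind.2 ⟨by simp [hf a], fun {m} hm => ?_⟩
  simpa using fun hpm => (Nat.count_strict_mono hpm hm).ne

theorem Int.natAbs_eq_encode_add_one_div_two (z : ℤ) : z.natAbs = (encode z + 1) / 2 := by
  cases z with
  | ofNat n => change n = (2 * n + 1) / 2; omega
  | negSucc n => change n + 1 = (2 * n + 1 + 1) / 2; omega

theorem Int.encode_mod_two_eq_one_iff (z : ℤ) : encode z % 2 = 1 ↔ z < 0 := by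
  cases z with
  | ofNat n => change (2 * n) % 2 = 1 ↔ _; simp
  | negSucc n => change (2 * n + 1) % 2 = 1 ↔ _; simp [Int.negSucc_lt_zero]

/- Mathlib's `Primcodable ℚ` is `Primcodable.ofDenumerable`: its code of `q` is not
`Rat.instEncodable`'s code `Nat.pair (encode q.num) q.den`, but the rank (`Nat.count`) of that
code among all such codes. Rational comparisons are computable once this rank is inverted. -/
namespace Rat

theorem encode_eq_pair (q : ℚ) : encode q = Nat.pair (encode q.num) q.den := rfl

theorem mem_range_encode_iff (m : ℕ) :
    m ∈ Set.range (encode : ℚ → ℕ) ↔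
      0 < m.unpair.2 ∧ Nat.gcd ((m.unpair.1 + 1) / 2) m.unpair.2 = 1 := by
  constructor
  · rintro ⟨q, rfl⟩
    rw [encode_eq_pair]
    simp only [Nat.unpair_pair, ← Int.natAbs_eq_encode_add_one_div_two]
    exact ⟨q.den_pos, q.reduced⟩
  · rintro ⟨hden, hcop⟩
    set z : ℤ := Equiv.intEquivNat.symm m.unpair.1
    have hz : encode z = m.unpair.1 := Equiv.intEquivNat.apply_symm_apply _
    refine ⟨⟨z, m.unpair.2, hden.ne', by rwa [Int.natAbs_eq_encode_add_one_div_two, hz]⟩, ?_⟩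
    rw [encode_eq_pair]
    simp only [hz, Nat.pair_unpair]

theorem primrecPred_mem_range_encode : PrimrecPred (· ∈ Set.range (encode : ℚ → ℕ)) :=
  (PrimrecPred.and (Primrec.nat_lt.comp (Primrec.const 0) (Primrec.snd.comp Primrec.unpair))
    (Primrec.eq.comp (Primrec.nat_gcd.comp
      (Primrec.nat_div.comp (Primrec.succ.comp (Primrec.fst.comp Primrec.unpair)) (Primrec.const 2))
      (Primrec.snd.comp Primrec.unpair)) (Primrec.const 1))).of_eq
    fun m => (mem_range_encode_iff m).symm

attribute [local instance] Encodable.decidableRangeEncode in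
theorem computable_encode : Computable (encode : ℚ → ℕ) :=
  Computable.of_count primrecPred_mem_range_encode (fun q => ⟨q, rfl⟩)
    ((Computable.encode (α := ℚ)).of_eq fun _ => rfl)

theorem lt_inv_two_pow_iff (q : ℚ) (n : ℕ) :
    q < (2 ^ n)⁻¹ ↔ q.num < 0 ∨ q.num.natAbs * 2 ^ n < q.den := by
  have hiff : q < (2 ^ n)⁻¹ ↔ q.num * 2 ^ n < q.den := by
    conv_lhs => rw [← Rat.num_div_den q]
    rw [← one_div, div_lt_div_iff₀ (by exact_mod_cast q.den_pos) (by positivity), one_mul]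
    exact_mod_cast Iff.rfl
  rw [hiff]
  rcases lt_or_ge q.num 0 with hneg | hnonneg
  · have : q.num * 2 ^ n < 0 := Int.mul_neg_of_neg_of_pos hneg (by positivity)
    exact ⟨fun _ => Or.inl hneg, fun _ => this.trans (by exact_mod_cast q.den_pos)⟩
  · rw [← Int.natAbs_of_nonneg hnonneg]
    simp only [Int.natCast_nonneg, not_lt.2, false_or]
    exact_mod_cast Iff.rfl

theorem computable₂_decide_lt_inv_two_pow :
    Computable₂ fun (n : ℕ) (q : ℚ) => decide (q < (2 ^ n)⁻¹) := by
  have hnum : Computable fun q : ℚ => encode q.num :=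
    (Computable.fst.comp (Computable.unpair.comp computable_encode)).of_eq
      fun q => by simp only [encode_eq_pair, Nat.unpair_pair]
  have hden : Computable fun q : ℚ => q.den :=
    (Computable.snd.comp (Computable.unpair.comp computable_encode)).of_eq
      fun q => by simp only [encode_eq_pair, Nat.unpair_pair]
  have htest : Computable fun p : ℕ × ℕ × ℕ =>
      decide (p.2.1 % 2 = 1 ∨ (p.2.1 + 1) / 2 * 2 ^ p.1 < p.2.2) :=
    (PrimrecPred.or (Primrec.eq.comp (Primrec.nat_mod.comp (Primrec.fst.comp Primrec.snd)
        (Primrec.const 2)) (Primrec.const 1))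
      (Primrec.nat_lt.comp (Primrec.nat_mul.comp
        (Primrec.nat_div.comp (Primrec.succ.comp (Primrec.fst.comp Primrec.snd)) (Primrec.const 2))
        (Primrec.nat_pow.comp (Primrec.const 2) Primrec.fst))
        (Primrec.snd.comp Primrec.snd))).decide.to_comp
  refine (htest.comp (Computable.pair Computable.fst
    (Computable.pair (hnum.comp Computable.snd) (hden.comp Computable.snd)))).of_eq ?_
  rintro ⟨n, q⟩
  simp only [lt_inv_two_pow_iff, Int.encode_mod_two_eq_one_iff,
    ← Int.natAbs_eq_encode_add_one_div_two]

end Rat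

theorem Nat.Partrec.Code.exists_outputs_self_referential_witness {T : Code → ℕ → Bool}
    (hT : Computable₂ T) (hT_ex : ∀ e, ∃ x, T e x = true) :
    ∃ e y, Outputs e y ∧ T e y = true := by
  have hsearch : Partrec₂ fun (e : Code) (_ : ℕ) => Nat.rfind fun x => Part.some (T e x) :=
    _root_.Partrec.rfind (hT.comp (Computable.fst.comp Computable.fst) Computable.snd).to₂.partrec₂
  obtain ⟨e, he⟩ := Nat.Partrec.Code.fixed_point₂ hsearch
  obtain ⟨y, hy, -⟩ := Nat.rfind_min' (hT_ex e).choose_spec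
  exact ⟨e, y, by rw [Outputs, he]; exact Part.eq_some_iff.2 hy,
    Part.mem_some_iff.1 (Nat.rfind_spec hy) |>.symm⟩

theorem C_le_codeLen {e : Code} {y : ℕ} (h : Outputs e y) : C y ≤ codeLen e :=
  Nat.sInf_le ⟨e, h, rfl⟩

theorem codeLen_le_encode (e : Code) : codeLen e ≤ encode e :=
  Nat.size_le.2 Nat.lt_two_pow_self

def EmulatesUniversal (L : Set Code) (d : ℕ) : Prop :=
  ∀ z : ℕ, ∃ e ∈ L, Outputs e z ∧ codeLen e ≤ C z + d

namespace EmulatesUniversal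

variable {L : Set Code} {d : ℕ}

theorem exists_codeLen_eq_CL (hL : EmulatesUniversal L d) (y : ℕ) :
    ∃ e ∈ L, Outputs e y ∧ codeLen e = CL L y := by
  obtain ⟨e, heL, hey, -⟩ := hL y
  exact Nat.sInf_mem (s := {n | ∃ e ∈ L, Outputs e y ∧ codeLen e = n}) ⟨codeLen e, e, heL, hey, rfl⟩

theorem CL_le (hL : EmulatesUniversal L d) (y : ℕ) : CL L y ≤ C y + d := by
  obtain ⟨e, heL, hey, hlen⟩ := hL y
  exact (Nat.sInf_le (s := {n | ∃ e ∈ L, Outputs e y ∧ codeLen e = n}) ⟨e, heL, hey, rfl⟩).trans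
    hlen

end EmulatesUniversal

theorem exists_outputs_high_index_small_prob {c : ℕ → ℕ} (hc : Computable c) {P : ℕ → ℚ}
    (hP : Computable P) (hsmall : ∀ N : ℕ, ∀ ε : ℚ, 0 < ε → ∃ x : ℕ, N ≤ c x ∧ P x < ε)
    (K : ℕ) : ∃ e y, Outputs e y ∧ encode e + K ≤ c y ∧ P y < (2 ^ (encode e + K))⁻¹ := by
  -- The code number `encode e ≥ codeLen e` stands in for the length, so `Nat.size` need not be
  -- shown computable.
  have hT : Computable₂ fun (e : Code) (x : ℕ) =>
      decide (encode e + K ≤ c x) && decide (P x < (2 ^ (encode e + K))⁻¹) := by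
    have hn : Computable fun p : Code × ℕ => encode p.1 + K :=
      (Primrec.nat_add.comp (Primrec.encode.comp Primrec.fst) (Primrec.const K)).to_comp
    exact (Primrec.and.to_comp.comp
      ((Primrec.nat_le.decide.to_comp).comp hn (hc.comp Computable.snd))
      (Rat.computable₂_decide_lt_inv_two_pow.comp hn (hP.comp Computable.snd))).to₂
  obtain ⟨e, y, hout, hy⟩ := Nat.Partrec.Code.exists_outputs_self_referential_witness hT
    fun e => by simpa using hsmall (encode e + K) _ (by positivity)
  simp only [Bool.and_eq_true, decide_eq_true_eq] at hy
  exact ⟨e, y, hout, hy⟩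

theorem assembly_index_deceived_in_subuniversal_space_general
    (c : ℕ → ℕ) (hc : Computable c)
    (P : ℕ → ℚ) (hP : Computable P)
    (hsmall : ∀ N : ℕ, ∀ ε : ℚ, 0 < ε → ∃ x : ℕ, N ≤ c x ∧ P x < ε)
    (L : Set Nat.Partrec.Code) (d : ℕ)
    (hL : ∀ z : ℕ, ∃ e ∈ L, Outputs e z ∧ codeLen e ≤ C z + d)
    (E m : ℕ) :
    ∃ y : ℕ, (∃ e ∈ L, Outputs e y ∧ codeLen e = CL L y) ∧
      CL L y + E < c y ∧ (P y : ℝ) < (2 : ℝ) ^ (-((CL L y + m : ℕ) : ℤ)) := by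
  obtain ⟨e, y, hout, hcy, hPy⟩ :=
    exists_outputs_high_index_small_prob hc hP hsmall (d + E + m + 1)
  have hCL : CL L y ≤ encode e + d :=
    (EmulatesUniversal.CL_le hL y).trans
      (Nat.add_le_add_right ((C_le_codeLen hout).trans (codeLen_le_encode e)) d)
  refine ⟨y, EmulatesUniversal.exists_codeLen_eq_CL hL y, by omega, ?_⟩
  calc (P y : ℝ) < ((2 ^ (encode e + (d + E + m + 1)))⁻¹ : ℚ) := Rat.cast_lt.2 hPy
    _ = (2 : ℝ) ^ (-((encode e + (d + E + m + 1) : ℕ) : ℤ)) := by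
        rw [zpow_neg, zpow_natCast]; push_cast; rfl
    _ ≤ (2 : ℝ) ^ (-((CL L y + m : ℕ) : ℤ)) :=
        zpow_le_zpow_right₀ one_le_two (by omega)

/-- Theorem 2.4: for a computable assembly index `c` with unbounded range, a computable
pathway-probability bound `P` jointly small along high-index objects, and a set `L` of codes
emulating the universal machine with overhead `d`, for all `E, m` there is an object `y`
such that the sub-algorithmic complexity `CL L y` is attained by some code in `L`,
`CL L y + E < c y`, and `P y < 2^(-(CL L y + m))`. -/
theorem assembly_index_deceived_in_subuniversal_space
    (c : ℕ → ℕ) (hc : Computable c) (hub : ∀ N : ℕ, ∃ x : ℕ, N ≤ c x)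
    (P : ℕ → ℚ) (hP : Computable P) (hP01 : ∀ y : ℕ, 0 ≤ P y ∧ P y ≤ 1)
    (hsmall : ∀ N : ℕ, ∀ ε : ℚ, 0 < ε → ∃ x : ℕ, N ≤ c x ∧ P x < ε)
    (L : Set Nat.Partrec.Code) (d : ℕ)
    (hL : ∀ z : ℕ, ∃ e ∈ L, Outputs e z ∧ codeLen e ≤ C z + d)
    (E m : ℕ) :
    ∃ y : ℕ, (∃ e ∈ L, Outputs e y ∧ codeLen e = CL L y) ∧
      CL L y + E < c y ∧ (P y : ℝ) < (2 : ℝ) ^ (-((CL L y + m : ℕ) : ℤ)) :=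
  assembly_index_deceived_in_subuniversal_space_general c hc P hP hsmall L d hL E m
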